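/- arXiv:0902.2818 — 10 statements merged into one kernel-verified Lean document; each statement's English description precedes it below -/
import Mathlib

section
/- A topology on a type X is self-dual (that is, the complement of every open set is open) if and only if there exists a topological basis B for this topology such that every member of B is nonempty, the members of B are pairwise disjoint, and the union of B is all of X (i.e., B is a partition of X). -/
/-!
In a self-dual topology open and closed sets coincide, so specialization is symmetric and the
closures of points, which are then open, are the classes of inseparable points: they form a
partition of the space, and every open set, being closed, contains the closure of each of its
points. Conversely, if a basis partitions the space, a basic set meeting an open set `U` meets a
basic set inside `U` and therefore is that set; hence the basic set around a point of the closure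
of `U` lies in `U`, and `U` is closed.
-/

open Set TopologicalSpace

def IsSelfDual (X : Type*) [TopologicalSpace X] : Prop :=
  ∀ U : Set X, IsOpen U → IsOpen Uᶜ

section

variable {X : Type*} [TopologicalSpace X]

namespace IsSelfDual

theorem isClosed (h : IsSelfDual X) {U : Set X} (hU : IsOpen U) : IsClosed U :=
  isOpen_compl_iff.mp (h U hU)

theorem isOpen (h : IsSelfDual X) {U : Set X} (hU : IsClosed U) : IsOpen U := by
  simpa using h _ hU.isOpen_compl

theorem r0Space (h : IsSelfDual X) : R0Space X where
  specializes_symm.symm _ _ hxy :=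
    specializes_iff_forall_open.mpr fun _ hU hx => hxy.mem_closed (h.isClosed hU) hx

theorem isTopologicalBasis_range_closure_singleton (h : IsSelfDual X) :
    IsTopologicalBasis (range fun x : X => closure {x}) := by
  refine isTopologicalBasis_of_isOpen_of_nhds ?_ fun x U hx hU => ?_
  · rintro _ ⟨x, rfl⟩
    exact h.isOpen isClosed_closure
  · exact ⟨closure {x}, mem_range_self x, subset_closure rfl,
      (h.isClosed hU).closure_subset_iff.mpr (singleton_subset_iff.mpr hx)⟩

end IsSelfDual

theorem pairwise_disjoint_range_closure_singleton [R0Space X] :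
    (range fun x : X => closure {x}).Pairwise Disjoint := by
  rintro _ ⟨x, rfl⟩ _ ⟨y, rfl⟩ hne
  by_contra hxy
  apply hne
  obtain ⟨z, hxz, hyz⟩ := not_disjoint_iff.mp hxy
  have hxz : Inseparable x z := (specializes_iff_mem_closure.mpr hxz).inseparable
  have hyz : Inseparable y z := (specializes_iff_mem_closure.mpr hyz).inseparable
  exact inseparable_iff_closure_eq.mp (hxz.trans hyz.symm)

theorem sUnion_range_closure_singleton : ⋃₀ range (fun x : X => closure {x}) = univ :=
  eq_univ_of_forall fun x => ⟨closure {x}, mem_range_self x, subset_closure rfl⟩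

namespace TopologicalSpace.IsTopologicalBasis

variable {B : Set (Set X)}

theorem subset_of_pairwise_disjoint (hB : IsTopologicalBasis B) (hd : B.Pairwise Disjoint)
    {b U : Set X} (hb : b ∈ B) (hU : IsOpen U) (hbU : (b ∩ U).Nonempty) : b ⊆ U := by
  obtain ⟨y, hyb, hyU⟩ := hbU
  obtain ⟨b', hb', hyb', hb'U⟩ := hB.exists_subset_of_mem_open hyU hU
  obtain rfl : b = b' := hd.eq hb hb' (not_disjoint_iff.mpr ⟨y, hyb, hyb'⟩)
  exact hb'U

theorem isSelfDual_of_pairwise_disjoint (hB : IsTopologicalBasis B)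
    (hd : B.Pairwise Disjoint) (hcov : ⋃₀ B = univ) : IsSelfDual X := by
  intro U hU
  refine isOpen_compl_iff.mpr (closure_subset_iff_isClosed.mp fun x hx => ?_)
  obtain ⟨b, hb, hxb⟩ := mem_sUnion.mp (hcov.symm ▸ mem_univ x)
  have hbU := _root_.mem_closure_iff.mp hx b (hB.isOpen hb) hxb
  exact hB.subset_of_pairwise_disjoint hd hb hU hbU hxb

end TopologicalSpace.IsTopologicalBasis

end

/-- Satz 1.1: A topology is self-dual (complements of open sets are open)
iff it has a basis that is a partition of the space into nonempty pieces. -/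
theorem selfdual_iff_partition_basis {X : Type*} [TopologicalSpace X] :
    (∀ U : Set X, IsOpen U → IsOpen Uᶜ) ↔
      ∃ B : Set (Set X), TopologicalSpace.IsTopologicalBasis B ∧
        (∀ b ∈ B, b.Nonempty) ∧ B.Pairwise Disjoint ∧ ⋃₀ B = Set.univ := by
  constructor
  · intro h
    have : R0Space X := IsSelfDual.r0Space h
    refine ⟨_, IsSelfDual.isTopologicalBasis_range_closure_singleton h, ?_,
      pairwise_disjoint_range_closure_singleton, sUnion_range_closure_singleton⟩
    rintro _ ⟨x, rfl⟩
    exact singleton_nonempty x |>.closure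
  · rintro ⟨B, hB, -, hd, hcov⟩
    exact hB.isSelfDual_of_pairwise_disjoint hd hcov
end

section
/- Let X carry a self-dual topology (the complement of every open set is open) and let U be a nonempty open set. Then the intersection of all open sets meeting U, namely ⋂₀ {W : Set X | IsOpen W ∧ (W ∩ U).Nonempty}, is either the empty set or equal to U. -/
/-! If some point `x` lies in every open set meeting `U`, then no open `W` meeting `U` can miss a
point of `U`: otherwise the open set `Wᶜ` would also meet `U`, forcing `x ∈ W ∩ Wᶜ`. Hence every
open set meeting `U` contains `U`, and the intersection is `U` itself. -/

open Set

namespace TopologicalSpace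

variable {X : Type*} [TopologicalSpace X]

def selection (U : Set X) : Set (Set X) :=
  {W | IsOpen W ∧ (W ∩ U).Nonempty}

theorem sInter_selection_subset {U : Set X} (hU : IsOpen U) (hne : U.Nonempty) :
    ⋂₀ selection U ⊆ U :=
  sInter_subset_of_mem ⟨hU, by rwa [inter_self]⟩

theorem subset_of_mem_sInter_selection (hsd : ∀ V : Set X, IsOpen V → IsOpen Vᶜ) {U : Set X}
    {x : X} (hx : x ∈ ⋂₀ selection U) {W : Set X} (hW : W ∈ selection U) : U ⊆ W := by
  intro u hu
  by_contra huW
  exact hx Wᶜ ⟨hsd W hW.1, u, huW, hu⟩ (hx W hW)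

theorem sInter_selection_eq_of_nonempty (hsd : ∀ V : Set X, IsOpen V → IsOpen Vᶜ) {U : Set X}
    (hU : IsOpen U) (hne : U.Nonempty) (h : (⋂₀ selection U).Nonempty) :
    ⋂₀ selection U = U := by
  obtain ⟨x, hx⟩ := h
  exact (sInter_selection_subset hU hne).antisymm
    (subset_sInter fun _ hW => subset_of_mem_sInter_selection hsd hx hW)

end TopologicalSpace

/-- Key dichotomy in the proof of Satz 1.1: in a self-dual topology, the
intersection of all open sets meeting a nonempty open set U is ∅ or U. -/
theorem selfdual_selection_dichotomy {X : Type*} [TopologicalSpace X]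
    (hsd : ∀ U : Set X, IsOpen U → IsOpen Uᶜ)
    (U : Set X) (hU : IsOpen U) (hne : U.Nonempty) :
    ⋂₀ {W : Set X | IsOpen W ∧ (W ∩ U).Nonempty} = ∅ ∨
      ⋂₀ {W : Set X | IsOpen W ∧ (W ∩ U).Nonempty} = U :=
  (⋂₀ TopologicalSpace.selection U).eq_empty_or_nonempty.imp id
    (TopologicalSpace.sInter_selection_eq_of_nonempty hsd hU hne)
end

section
/- Let Ξ be a set of permutations of a type Y, let G = Subgroup.closure Ξ, and let χ ⊆ Y be nonempty with ξ '' χ = χ for every ξ ∈ Ξ. Then χ equals the intersection ⋂₀ {U : Set Y | (∀ ξ ∈ Ξ, ξ '' U = U) ∧ (U ∩ χ).Nonempty} of all Ξ-invariant sets meeting χ if and only if for all nonempty subsets a, b ⊆ χ there exists g ∈ G such that (g '' a) ∩ b is nonempty. -/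
/-!
If `χ` is coherent, then for nonempty `a ⊆ χ` the union of the `G`-translates of `a` is
an invariant set meeting `χ`, hence contains `χ` and in particular meets every nonempty `b ⊆ χ`.
Conversely, if `U` is invariant and meets `χ`, coherence applied to `U ∩ χ` and a singleton `{y}`
moves a point of `U` onto `y`; since `U` is invariant under all of `G`, `y ∈ U`, so `χ` lies in
every invariant set meeting it, while `χ` is itself one of them.
-/

open Pointwise

namespace Equiv.Perm

variable {Y : Type*}

theorem image_eq_of_mem_closure {Ξ : Set (Perm Y)} {U : Set Y} (hU : ∀ ξ ∈ Ξ, ξ '' U = U)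
    {g : Perm Y} (hg : g ∈ Subgroup.closure Ξ) : g '' U = U :=
  MulAction.mem_stabilizer_iff.1 <|
    (Subgroup.closure_le (MulAction.stabilizer (Perm Y) U)).2
      (fun ξ hξ => MulAction.mem_stabilizer_iff.2 (hU ξ hξ)) hg

theorem image_iUnion_image_subgroup (G : Subgroup (Perm Y)) (a : Set Y) {g : Perm Y}
    (hg : g ∈ G) : g '' ⋃ h : G, (h : Perm Y) '' a = ⋃ h : G, (h : Perm Y) '' a := by
  rw [Set.image_iUnion]
  simp_rw [← Set.image_comp]
  exact (Equiv.mulLeft (⟨g, hg⟩ : G)).surjective.iUnion_comp fun h : G => (h : Perm Y) '' a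

end Equiv.Perm

/-- Lemma 1.3 (Indifferente Kohärenz): a nonempty Ξ-invariant set χ is an
integere set of the common invariant topology iff any two nonempty subsets of χ
can be made to intersect by some element of the generated group. -/
theorem integere_iff_coherent {Y : Type*} (Ξ : Set (Equiv.Perm Y)) (χ : Set Y)
    (hne : χ.Nonempty) (hinv : ∀ ξ ∈ Ξ, ξ '' χ = χ) :
    χ = ⋂₀ {U : Set Y | (∀ ξ ∈ Ξ, ξ '' U = U) ∧ (U ∩ χ).Nonempty} ↔
      ∀ a b : Set Y, a ⊆ χ → b ⊆ χ → a.Nonempty → b.Nonempty →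
        ∃ g ∈ Subgroup.closure Ξ, ((g : Equiv.Perm Y) '' a ∩ b).Nonempty := by
  constructor
  · rintro h a b ha hb ⟨x, hx⟩ ⟨y, hy⟩
    have hχ : χ ⊆ ⋃ g : Subgroup.closure Ξ, (g : Equiv.Perm Y) '' a :=
      h ▸ Set.sInter_subset_of_mem
        ⟨fun _ hξ => Equiv.Perm.image_iUnion_image_subgroup _ a (Subgroup.subset_closure hξ),
          x, Set.mem_iUnion.2 ⟨1, x, hx, rfl⟩, ha hx⟩
    obtain ⟨g, hyg⟩ := Set.mem_iUnion.1 (hχ (hb hy))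
    exact ⟨g, g.2, y, hyg, hy⟩
  · intro h
    refine (Set.subset_sInter ?_).antisymm
      (Set.sInter_subset_of_mem ⟨hinv, hne.imp fun x hx => ⟨hx, hx⟩⟩)
    rintro U ⟨hU, hUχ⟩ y hy
    obtain ⟨g, hg, _, ⟨x, ⟨hxU, -⟩, rfl⟩, hgx⟩ :=
      h (U ∩ χ) {y} Set.inter_subset_right (Set.singleton_subset_iff.2 hy) hUχ ⟨y, rfl⟩
    rw [← Equiv.Perm.image_eq_of_mem_closure hU hg, ← Set.mem_singleton_iff.1 hgx]
    exact Set.mem_image_of_mem g hxU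
end

section
/- Let Ξ be a set of permutations of a type Y, let G = Subgroup.closure Ξ, and let χ ⊆ Y be nonempty. Then χ equals the intersection ⋂₀ {U : Set Y | (∀ ξ ∈ Ξ, ξ '' U = U) ∧ (U ∩ χ).Nonempty} of all Ξ-invariant sets meeting χ if and only if χ is a G-orbit, i.e., there exists x ∈ Y with χ = MulAction.orbit G x. -/
/-!
A set invariant under each ξ ∈ Ξ is invariant under the group generated by Ξ, hence contains the
orbit of each of its points, while every orbit is itself invariant. So for x ∈ χ the intersection
of the invariant sets meeting χ lies in the orbit of x, and contains that orbit as soon as it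
contains x.
-/

open MulAction Pointwise

namespace Equiv.Perm

variable {Y : Type*}

theorem image_eq_smul_set (ξ : Perm Y) (U : Set Y) : ξ '' U = ξ • U :=
  (Set.image_smul (a := ξ) (t := U)).symm

theorem closure_le_stabilizer_of_image_eq {Ξ : Set (Perm Y)} {U : Set Y}
    (hU : ∀ ξ ∈ Ξ, ξ '' U = U) : Subgroup.closure Ξ ≤ stabilizer (Perm Y) U :=
  (Subgroup.closure_le _).2 fun ξ hξ => by
    rw [SetLike.mem_coe, mem_stabilizer_iff, ← image_eq_smul_set, hU ξ hξ]

theorem orbit_closure_subset_of_image_eq {Ξ : Set (Perm Y)} {U : Set Y}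
    (hU : ∀ ξ ∈ Ξ, ξ '' U = U) {x : Y} (hx : x ∈ U) :
    orbit (Subgroup.closure Ξ) x ⊆ U := by
  rintro _ ⟨g, rfl⟩
  rw [← closure_le_stabilizer_of_image_eq hU g.2]
  exact Set.smul_mem_smul_set hx

theorem image_orbit_of_mem {H : Subgroup (Perm Y)} {ξ : Perm Y} (hξ : ξ ∈ H) (x : Y) :
    ξ '' orbit H x = orbit H x :=
  Set.image_smul.trans (smul_orbit (⟨ξ, hξ⟩ : H) x)

variable {Ξ : Set (Perm Y)} {χ : Set Y} {x : Y}

theorem sInter_invariant_meeting_subset_orbit (hx : x ∈ χ) :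
    ⋂₀ {U : Set Y | (∀ ξ ∈ Ξ, ξ '' U = U) ∧ (U ∩ χ).Nonempty} ⊆
      orbit (Subgroup.closure Ξ) x :=
  Set.sInter_subset_of_mem
    ⟨fun _ hξ => image_orbit_of_mem (Subgroup.subset_closure hξ) x, x, mem_orbit_self x, hx⟩

theorem orbit_subset_sInter_invariant_meeting
    (hx : x ∈ ⋂₀ {U : Set Y | (∀ ξ ∈ Ξ, ξ '' U = U) ∧ (U ∩ χ).Nonempty}) :
    orbit (Subgroup.closure Ξ) x ⊆
      ⋂₀ {U : Set Y | (∀ ξ ∈ Ξ, ξ '' U = U) ∧ (U ∩ χ).Nonempty} :=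
  fun _ hy U hU => orbit_closure_subset_of_image_eq hU.1 (hx U hU) hy

theorem mem_sInter_invariant_meeting_orbit :
    x ∈ ⋂₀ {U : Set Y | (∀ ξ ∈ Ξ, ξ '' U = U) ∧
      (U ∩ orbit (Subgroup.closure Ξ) x).Nonempty} :=
  fun _ ⟨hU, _, hyU, hyx⟩ => orbit_closure_subset_of_image_eq hU hyU (mem_orbit_symm.1 hyx)

end Equiv.Perm

/-- The nonempty integere sets of the common invariant topology of Ξ are exactly
the orbits of the subgroup generated by Ξ. -/
theorem integere_iff_orbit {Y : Type*} (Ξ : Set (Equiv.Perm Y)) (χ : Set Y)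
    (hne : χ.Nonempty) :
    χ = ⋂₀ {U : Set Y | (∀ ξ ∈ Ξ, ξ '' U = U) ∧ (U ∩ χ).Nonempty} ↔
      ∃ x : Y, χ = MulAction.orbit (Subgroup.closure Ξ) x := by
  constructor
  · intro h
    obtain ⟨x, hx⟩ := hne
    refine ⟨x, h.trans (subset_antisymm ?_ ?_)⟩
    · exact Equiv.Perm.sInter_invariant_meeting_subset_orbit hx
    · exact Equiv.Perm.orbit_subset_sInter_invariant_meeting (h ▸ hx)
  · rintro ⟨x, rfl⟩
    exact subset_antisymm
      (Equiv.Perm.orbit_subset_sInter_invariant_meeting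
        Equiv.Perm.mem_sInter_invariant_meeting_orbit)
      (Equiv.Perm.sInter_invariant_meeting_subset_orbit (mem_orbit_self x))
end

section
/- Let φ : ℝ → Y → Y be a flow on a type Y (φ 0 = id and φ (s + t) = φ s ∘ φ t for all s, t), and let χ ⊆ Y be nonempty and flow-invariant (φ t '' χ = χ for all t). Then the following are equivalent: (i) for all nonempty subsets A, B ⊆ χ there exists t : ℝ with (φ t '' A) ∩ B nonempty; (ii) χ is a single trajectory, i.e., there exists x ∈ Y with χ = {φ t x | t : ℝ}. -/
/-! Coherence applied to the singletons `{x}` and `{y}` says that `y` lies on the trajectory of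
`x`; conversely, on a trajectory the time `u - s` carries `φ s x` to `φ u x`. -/

open Set

section

variable {T Y : Type*}

def IsCoherent (φ : T → Y → Y) (χ : Set Y) : Prop :=
  ∀ A B : Set Y, A ⊆ χ → B ⊆ χ → A.Nonempty → B.Nonempty → ∃ t, ((φ t '' A) ∩ B).Nonempty

theorem IsCoherent.exists_apply_eq {φ : T → Y → Y} {χ : Set Y} (h : IsCoherent φ χ) {x y : Y}
    (hx : x ∈ χ) (hy : y ∈ χ) : ∃ t, φ t x = y := by
  obtain ⟨t, z, ⟨x', rfl, rfl⟩, rfl⟩ :=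
    h {x} {y} (singleton_subset_iff.2 hx) (singleton_subset_iff.2 hy)
      (singleton_nonempty x) (singleton_nonempty y)
  exact ⟨t, rfl⟩

theorem IsCoherent.subset_range {φ : T → Y → Y} {χ : Set Y} (h : IsCoherent φ χ) {x : Y}
    (hx : x ∈ χ) : χ ⊆ range (φ · x) :=
  fun _ hy ↦ h.exists_apply_eq hx hy

theorem range_subset_of_forall_image_eq {φ : T → Y → Y} {χ : Set Y}
    (hinv : ∀ t, φ t '' χ = χ) {x : Y} (hx : x ∈ χ) : range (φ · x) ⊆ χ := by
  rintro _ ⟨t, rfl⟩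
  exact hinv t ▸ mem_image_of_mem (φ t) hx

theorem apply_sub_apply_of_add {G : Type*} [AddGroup G] {φ : G → Y → Y}
    (hadd : ∀ s t, φ (s + t) = φ s ∘ φ t) (u s : G) (x : Y) :
    φ (u - s) (φ s x) = φ u x := by
  rw [← Function.comp_apply (f := φ (u - s)), ← hadd, sub_add_cancel]

theorem isCoherent_range {G : Type*} [AddGroup G] {φ : G → Y → Y}
    (hadd : ∀ s t, φ (s + t) = φ s ∘ φ t) (x : Y) : IsCoherent φ (range (φ · x)) := by
  rintro A B hA hB ⟨a, ha⟩ ⟨b, hb⟩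
  obtain ⟨s, rfl⟩ := hA ha
  obtain ⟨u, rfl⟩ := hB hb
  exact ⟨u - s, φ u x, ⟨φ s x, ha, apply_sub_apply_of_add hadd u s x⟩, hb⟩

end

theorem coherent_iff_trajectory_general {Y : Type*} (φ : ℝ → Y → Y)
    (hadd : ∀ s t : ℝ, φ (s + t) = φ s ∘ φ t)
    (χ : Set Y) (hne : χ.Nonempty) (hinv : ∀ t : ℝ, φ t '' χ = χ) :
    (∀ A B : Set Y, A ⊆ χ → B ⊆ χ → A.Nonempty → B.Nonempty →
        ∃ t : ℝ, ((φ t '' A) ∩ B).Nonempty) ↔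
      ∃ x : Y, χ = {y | ∃ t : ℝ, φ t x = y} := by
  constructor
  · intro h
    obtain ⟨x, hx⟩ := hne
    exact ⟨x, (IsCoherent.subset_range h hx).antisymm
      (range_subset_of_forall_image_eq hinv hx)⟩
  · rintro ⟨x, rfl⟩
    exact isCoherent_range hadd x

/-- For a flow, a nonempty flow-invariant set satisfies the (free-attractor)
coherence condition relative to the full power set iff it is a single
trajectory. -/
theorem coherent_iff_trajectory {Y : Type*} (φ : ℝ → Y → Y)
    (h0 : φ 0 = id) (hadd : ∀ s t : ℝ, φ (s + t) = φ s ∘ φ t)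
    (χ : Set Y) (hne : χ.Nonempty) (hinv : ∀ t : ℝ, φ t '' χ = χ) :
    (∀ A B : Set Y, A ⊆ χ → B ⊆ χ → A.Nonempty → B.Nonempty →
        ∃ t : ℝ, ((φ t '' A) ∩ B).Nonempty) ↔
      ∃ x : Y, χ = {y | ∃ t : ℝ, φ t x = y} :=
  coherent_iff_trajectory_general φ hadd χ hne hinv
end

section
/- Let φ : ℝ → Y → Y be a flow on a type Y (φ 0 = id, φ (s + t) = φ s ∘ φ t), let 𝒜 be a family of subsets of Y covering Y (⋃₀ 𝒜 = Set.univ), and let cl_𝒜(X) = ⋂₀ {C : Set Y | Cᶜ ∈ 𝒜 ∧ X ⊆ C}. Assume every flow map commutes with the hull operator: φ t '' cl_𝒜(X) = cl_𝒜(φ t '' X) for all t : ℝ and X ⊆ Y. Then for every x ∈ Y, writing χ = cl_𝒜({φ t x | t : ℝ}) for the hull of the trajectory of x: (a) χ is flow-invariant, φ t '' χ = χ for all t; and (b) for all A, B ∈ 𝒜 with A ∩ χ nonempty and B ∩ χ nonempty, there exists t : ℝ such that (φ t '' (A ∩ χ)) ∩ (B ∩ χ) is nonempty. -/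
def clA {Y : Type*} (𝒜 : Set (Set Y)) (X : Set Y) : Set Y :=
  ⋂₀ {C : Set Y | Cᶜ ∈ 𝒜 ∧ X ⊆ C}

/-!
The trajectory `T` of `x` is flow-invariant, so commutation of the flow with the hull gives
`φ t '' cl T = cl (φ t '' T) = cl T`. For coherence, a set `A ∈ 𝒜` missing `T` has a complement
that is one of the closed sets defining `cl T`, so `A` misses `cl T` as well; hence `A` and `B`
contain trajectory points `φ s x` and `φ r x`, and the time `r - s` carries the first to the second.
-/

section Hull

variable {Y : Type*} {𝒜 : Set (Set Y)} {X A : Set Y}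

theorem subset_clA : X ⊆ clA 𝒜 X :=
  fun _ hy _ hC => hC.2 hy

theorem Set.Nonempty.inter_of_inter_clA (hA : A ∈ 𝒜) (h : (A ∩ clA 𝒜 X).Nonempty) :
    (A ∩ X).Nonempty := by
  by_contra hAX
  have hXAc : X ⊆ Aᶜ := fun y hyX hyA => hAX ⟨y, hyA, hyX⟩
  obtain ⟨y, hyA, hy⟩ := h
  exact hy Aᶜ ⟨by rwa [compl_compl], hXAc⟩ hyA

end Hull

section Flow

variable {Y : Type*} {φ : ℝ → Y → Y}

theorem flow_sub_apply_flow (hadd : ∀ s t : ℝ, φ (s + t) = φ s ∘ φ t) (x : Y) (r s : ℝ) :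
    φ (r - s) (φ s x) = φ r x := by
  rw [← Function.comp_apply (f := φ (r - s)), ← hadd, sub_add_cancel]

theorem image_range_flow (hadd : ∀ s t : ℝ, φ (s + t) = φ s ∘ φ t) (t : ℝ) (x : Y) :
    φ t '' Set.range (φ · x) = Set.range (φ · x) := by
  rw [← Set.range_comp]
  have hshift : (φ t ∘ (φ · x)) = (φ · x) ∘ (t + ·) := by
    ext s
    simp [hadd]
  rw [hshift, (add_left_surjective t).range_comp]

end Flow

theorem generalized_insensitive_ergodic_general {Y : Type*} (φ : ℝ → Y → Y)
    (hadd : ∀ s t : ℝ, φ (s + t) = φ s ∘ φ t)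
    (𝒜 : Set (Set Y))
    (hcomm : ∀ (t : ℝ) (X : Set Y), φ t '' clA 𝒜 X = clA 𝒜 (φ t '' X))
    (x : Y) :
    (∀ t : ℝ, φ t '' clA 𝒜 {y | ∃ s : ℝ, φ s x = y} =
        clA 𝒜 {y | ∃ s : ℝ, φ s x = y}) ∧
      (∀ A ∈ 𝒜, ∀ B ∈ 𝒜,
        (A ∩ clA 𝒜 {y | ∃ s : ℝ, φ s x = y}).Nonempty →
        (B ∩ clA 𝒜 {y | ∃ s : ℝ, φ s x = y}).Nonempty →
        ∃ t : ℝ, ((φ t '' (A ∩ clA 𝒜 {y | ∃ s : ℝ, φ s x = y})) ∩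
          (B ∩ clA 𝒜 {y | ∃ s : ℝ, φ s x = y})).Nonempty) := by
  refine ⟨fun t => (hcomm t _).trans (congrArg (clA 𝒜) (image_range_flow hadd t x)),
    fun A hA B hB hAne hBne => ?_⟩
  obtain ⟨_, hsA, s, rfl⟩ := hAne.inter_of_inter_clA hA
  obtain ⟨_, hrB, r, rfl⟩ := hBne.inter_of_inter_clA hB
  refine ⟨r - s, φ r x, ⟨φ s x, ⟨hsA, subset_clA ⟨s, rfl⟩⟩, ?_⟩, hrB, subset_clA ⟨r, rfl⟩⟩
  exact flow_sub_apply_flow hadd x r s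

/-- Satz 3.3 (verallgemeinerter insensitiver Ergodensatz): if all flow maps
commute with the hull operator of a covering set system 𝒜, then every hull of a
trajectory is flow-invariant and satisfies the coherence condition relative
to 𝒜. -/
theorem generalized_insensitive_ergodic {Y : Type*} (φ : ℝ → Y → Y)
    (h0 : φ 0 = id) (hadd : ∀ s t : ℝ, φ (s + t) = φ s ∘ φ t)
    (𝒜 : Set (Set Y)) (hcov : ⋃₀ 𝒜 = Set.univ)
    (hcomm : ∀ (t : ℝ) (X : Set Y), φ t '' clA 𝒜 X = clA 𝒜 (φ t '' X))
    (x : Y) :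
    (∀ t : ℝ, φ t '' clA 𝒜 {y | ∃ s : ℝ, φ s x = y} =
        clA 𝒜 {y | ∃ s : ℝ, φ s x = y}) ∧
      (∀ A ∈ 𝒜, ∀ B ∈ 𝒜,
        (A ∩ clA 𝒜 {y | ∃ s : ℝ, φ s x = y}).Nonempty →
        (B ∩ clA 𝒜 {y | ∃ s : ℝ, φ s x = y}).Nonempty →
        ∃ t : ℝ, ((φ t '' (A ∩ clA 𝒜 {y | ∃ s : ℝ, φ s x = y})) ∩
          (B ∩ clA 𝒜 {y | ∃ s : ℝ, φ s x = y})).Nonempty) :=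
  generalized_insensitive_ergodic_general φ hadd 𝒜 hcomm x
end

section
/- Let X be a compact topological space, let Φ : X × ℝ → X be jointly continuous, and let χ ⊆ X be a closed set that is invariant under all flow maps: (fun x => Φ (x, t)) '' χ = χ for every t : ℝ. Then the following are equivalent: (i) for all open sets U, V with (U ∩ χ) and (V ∩ χ) nonempty, there exists t : ℝ such that ((fun x => Φ (x, t)) '' (U ∩ χ)) ∩ (V ∩ χ) is nonempty; (ii) for all such U, V there exists a strictly increasing sequence u : ℕ → ℝ such that for every n, ((fun x => Φ (x, u n)) '' (U ∩ χ)) ∩ (V ∩ χ) is nonempty; (iii) for all such U, V there exists a strictly decreasing sequence u : ℕ → ℝ with the same property. -/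
/-!
For fixed `U` and `V`, the set of times `t` at which `Φₜ(U ∩ χ)` meets `V ∩ χ` is open in `ℝ`:
by invariance `Φₜ(U ∩ χ) ⊆ χ`, so it is the union over `x ∈ U ∩ χ` of the open sets
`{t | Φ (x, t) ∈ V}`. A nonempty open subset of `ℝ` contains a strictly increasing and a
strictly decreasing sequence (a strictly monotone sequence converging to one of its points,
from below resp. above, eventually lies in it).
-/

open Set Filter

section SeqInOpen

variable {α : Type*} [LinearOrder α] [TopologicalSpace α] [OrderTopology α] [DenselyOrdered α]
  [FirstCountableTopology α] {s : Set α}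

theorem IsOpen.nonempty_iff_exists_strictMono [NoMinOrder α] (hs : IsOpen s) :
    s.Nonempty ↔ ∃ u : ℕ → α, StrictMono u ∧ ∀ n, u n ∈ s := by
  refine ⟨fun ⟨t, ht⟩ => ?_, fun ⟨u, _, hu⟩ => ⟨u 0, hu 0⟩⟩
  obtain ⟨u, hu_mono, -, hu_lim⟩ := exists_seq_strictMono_tendsto t
  obtain ⟨φ, hφ_mono, hφ⟩ := extraction_of_eventually_atTop (hu_lim.eventually (hs.mem_nhds ht))
  exact ⟨u ∘ φ, hu_mono.comp hφ_mono, hφ⟩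

theorem IsOpen.nonempty_iff_exists_strictAnti [NoMaxOrder α] (hs : IsOpen s) :
    s.Nonempty ↔ ∃ u : ℕ → α, StrictAnti u ∧ ∀ n, u n ∈ s :=
  IsOpen.nonempty_iff_exists_strictMono (α := αᵒᵈ) hs

end SeqInOpen

theorem isOpen_setOf_image_inter_nonempty {X T : Type*} [TopologicalSpace X]
    [TopologicalSpace T] {Φ : X × T → X} (hΦ : Continuous Φ) (A : Set X) {V : Set X}
    (hV : IsOpen V) : IsOpen {t | ((fun x => Φ (x, t)) '' A ∩ V).Nonempty} := by
  have hunion : {t | ((fun x => Φ (x, t)) '' A ∩ V).Nonempty} =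
      ⋃ x ∈ A, (fun t => Φ (x, t)) ⁻¹' V := by
    ext t; simp [Set.Nonempty]
  rw [hunion]
  exact isOpen_biUnion fun x _ => hV.preimage (by fun_prop)

theorem image_inter_inter_eq_of_image_subset {α : Type*} {f : α → α} {χ : Set α}
    (hf : f '' χ ⊆ χ) (U V : Set α) : f '' (U ∩ χ) ∩ (V ∩ χ) = f '' (U ∩ χ) ∩ V := by
  have himage : f '' (U ∩ χ) ⊆ χ := (image_mono inter_subset_right).trans hf
  rw [← inter_assoc, inter_eq_left.mpr (inter_subset_left.trans himage)]

theorem coherence_criteria_equivalent_general {X : Type*} [TopologicalSpace X]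
    (Φ : X × ℝ → X) (hΦ : Continuous Φ)
    (χ : Set X)
    (hinv : ∀ t : ℝ, (fun x => Φ (x, t)) '' χ = χ) :
    ((∀ U V : Set X, IsOpen U → IsOpen V → (U ∩ χ).Nonempty → (V ∩ χ).Nonempty →
        ∃ t : ℝ, (((fun x => Φ (x, t)) '' (U ∩ χ)) ∩ (V ∩ χ)).Nonempty) ↔
      (∀ U V : Set X, IsOpen U → IsOpen V → (U ∩ χ).Nonempty → (V ∩ χ).Nonempty →
        ∃ u : ℕ → ℝ, StrictMono u ∧ ∀ n : ℕ,
          (((fun x => Φ (x, u n)) '' (U ∩ χ)) ∩ (V ∩ χ)).Nonempty)) ∧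
    ((∀ U V : Set X, IsOpen U → IsOpen V → (U ∩ χ).Nonempty → (V ∩ χ).Nonempty →
        ∃ t : ℝ, (((fun x => Φ (x, t)) '' (U ∩ χ)) ∩ (V ∩ χ)).Nonempty) ↔
      (∀ U V : Set X, IsOpen U → IsOpen V → (U ∩ χ).Nonempty → (V ∩ χ).Nonempty →
        ∃ u : ℕ → ℝ, StrictAnti u ∧ ∀ n : ℕ,
          (((fun x => Φ (x, u n)) '' (U ∩ χ)) ∩ (V ∩ χ)).Nonempty)) := by
  have hopen : ∀ U V : Set X, IsOpen V →
      IsOpen {t | ((fun x => Φ (x, t)) '' (U ∩ χ) ∩ (V ∩ χ)).Nonempty} := by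
    intro U V hV
    simp_rw [image_inter_inter_eq_of_image_subset (hinv _).subset]
    exact isOpen_setOf_image_inter_nonempty hΦ _ hV
  constructor <;> refine forall₂_congr fun U V => forall₄_congr fun _ hV _ _ => ?_
  exacts [(hopen U V hV).nonempty_iff_exists_strictMono,
    (hopen U V hV).nonempty_iff_exists_strictAnti]

/-- Bemerkung 2.3 (Diversität der Kohärenzkriterien): for a jointly continuous
flow function on a compact space and a closed flow-invariant set χ, the
ordinary, monotone increasing and monotone decreasing coherence criteria are
equivalent. -/
theorem coherence_criteria_equivalent {X : Type*} [TopologicalSpace X]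
    [CompactSpace X] (Φ : X × ℝ → X) (hΦ : Continuous Φ)
    (χ : Set X) (hcl : IsClosed χ)
    (hinv : ∀ t : ℝ, (fun x => Φ (x, t)) '' χ = χ) :
    ((∀ U V : Set X, IsOpen U → IsOpen V → (U ∩ χ).Nonempty → (V ∩ χ).Nonempty →
        ∃ t : ℝ, (((fun x => Φ (x, t)) '' (U ∩ χ)) ∩ (V ∩ χ)).Nonempty) ↔
      (∀ U V : Set X, IsOpen U → IsOpen V → (U ∩ χ).Nonempty → (V ∩ χ).Nonempty →
        ∃ u : ℕ → ℝ, StrictMono u ∧ ∀ n : ℕ,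
          (((fun x => Φ (x, u n)) '' (U ∩ χ)) ∩ (V ∩ χ)).Nonempty)) ∧
    ((∀ U V : Set X, IsOpen U → IsOpen V → (U ∩ χ).Nonempty → (V ∩ χ).Nonempty →
        ∃ t : ℝ, (((fun x => Φ (x, t)) '' (U ∩ χ)) ∩ (V ∩ χ)).Nonempty) ↔
      (∀ U V : Set X, IsOpen U → IsOpen V → (U ∩ χ).Nonempty → (V ∩ χ).Nonempty →
        ∃ u : ℕ → ℝ, StrictAnti u ∧ ∀ n : ℕ,
          (((fun x => Φ (x, u n)) '' (U ∩ χ)) ∩ (V ∩ χ)).Nonempty)) :=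
  coherence_criteria_equivalent_general Φ hΦ χ hinv
end

section
/- Let 𝒜 be a family of subsets of a type Y and let f : Y → Y be bijective. Then f is Cantor-continuous with respect to 𝒜 if and only if f maps every 𝒜-free set to an 𝒜-free set, i.e., whenever X ⊆ Y contains no nonempty member of 𝒜 as a subset, then f '' X also contains no nonempty member of 𝒜 as a subset. -/
/-- f is Cantor-continuous with respect to 𝒜. -/
def CantorCont {Y : Type*} (𝒜 : Set (Set Y)) (f : Y → Y) : Prop :=
  ∀ A ∈ 𝒜, A.Nonempty → ∃ B ∈ 𝒜, B.Nonempty ∧ f '' B ⊆ A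

/-!
Via `f '' B ⊆ A ↔ B ⊆ f ⁻¹' A`, Cantor continuity says exactly that the preimage of a nonempty
member of `𝒜` is never `𝒜`-free. For a bijection, `f ⁻¹' (f '' X) = X` and `f '' (f ⁻¹' A) = A`,
so this is the same as `f` carrying free sets to free sets.
-/

section

variable {Y : Type*} {𝒜 : Set (Set Y)} {f : Y → Y}

def IsFree (𝒜 : Set (Set Y)) (X : Set Y) : Prop :=
  ∀ A ∈ 𝒜, A.Nonempty → ¬ A ⊆ X

theorem IsFree.mono {X X' : Set Y} (hX : IsFree 𝒜 X) (hX' : X' ⊆ X) : IsFree 𝒜 X' :=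
  fun A hA hAne hAX' => hX A hA hAne (hAX'.trans hX')

theorem cantorCont_iff_not_isFree_preimage :
    CantorCont 𝒜 f ↔ ∀ A ∈ 𝒜, A.Nonempty → ¬ IsFree 𝒜 (f ⁻¹' A) := by
  simp only [CantorCont, IsFree, Set.image_subset_iff, not_forall, not_not, exists_prop]

theorem CantorCont.isFree_image (hc : CantorCont 𝒜 f) (hinj : f.Injective) {X : Set Y}
    (hX : IsFree 𝒜 X) : IsFree 𝒜 (f '' X) := by
  intro A hA hAne hAX
  have hpre : f ⁻¹' A ⊆ X := (Set.preimage_mono hAX).trans (Set.preimage_image_eq X hinj).le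
  exact cantorCont_iff_not_isFree_preimage.mp hc A hA hAne (hX.mono hpre)

theorem CantorCont.of_isFree_image (hsurj : f.Surjective)
    (himage : ∀ X, IsFree 𝒜 X → IsFree 𝒜 (f '' X)) : CantorCont 𝒜 f := by
  refine cantorCont_iff_not_isFree_preimage.mpr fun A hA hAne hfree => ?_
  have hA_free : IsFree 𝒜 A := Set.image_preimage_eq A hsurj ▸ himage _ hfree
  exact hA_free A hA hAne subset_rfl

end

/-- A bijection is Cantor-continuous with respect to 𝒜 iff it maps every
𝒜-free set (containing no nonempty member of 𝒜) to an 𝒜-free set. -/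
theorem cantorCont_iff_preserves_free {Y : Type*} (𝒜 : Set (Set Y))
    (f : Y → Y) (hf : Function.Bijective f) :
    CantorCont 𝒜 f ↔
      ∀ X : Set Y, (∀ A ∈ 𝒜, A.Nonempty → ¬ A ⊆ X) →
        (∀ A ∈ 𝒜, A.Nonempty → ¬ A ⊆ f '' X) :=
  ⟨fun hc _ hX => hc.isFree_image hf.injective hX,
    CantorCont.of_isFree_image hf.surjective⟩
end

section
/- Let 𝒜 be a family of subsets of a type Y and let S be a set of bijections of Y that is closed under taking inverses (for example, the underlying set of a subgroup of the permutation group of Y, such as a phase flow group). Then every element of S is Cantor-continuous with respect to 𝒜 if and only if every element of S is conversely Cantor-continuous with respect to 𝒜. -/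
/-- f is conversely Cantor-continuous with respect to 𝒜. -/
def ConvCantorCont {Y : Type*} (𝒜 : Set (Set Y)) (f : Y → Y) : Prop :=
  ∀ A ∈ 𝒜, A.Nonempty → ∃ B ∈ 𝒜, B.Nonempty ∧ B ⊆ f '' A

theorem cantorCont_iff_convCantorCont_inv {Y : Type*} (𝒜 : Set (Set Y)) (e : Equiv.Perm Y) :
    CantorCont 𝒜 ⇑e ↔ ConvCantorCont 𝒜 ⇑e⁻¹ := by
  simp only [CantorCont, ConvCantorCont, Equiv.Perm.inv_def, Equiv.subset_symm_image]

/-- (Korollar 3.9, provable core.) For a set of bijections closed under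
inverses, collective Cantor-continuity is equivalent to collective converse
Cantor-continuity. -/
theorem collective_cantorCont_iff_convCantorCont {Y : Type*}
    (𝒜 : Set (Set Y)) (S : Set (Equiv.Perm Y))
    (hS : ∀ e ∈ S, e⁻¹ ∈ S) :
    (∀ e ∈ S, CantorCont 𝒜 ⇑e) ↔ (∀ e ∈ S, ConvCantorCont 𝒜 ⇑e) := by
  constructor
  · intro h e he
    simpa only [inv_inv] using (cantorCont_iff_convCantorCont_inv 𝒜 e⁻¹).mp (h _ (hS e he))
  · exact fun h e he => (cantorCont_iff_convCantorCont_inv 𝒜 e).mpr (h _ (hS e he))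
end

section
/- Let Y be a finite type, 𝒜 a family of subsets of Y, and f : Y → Y a bijection. Then f is Cantor-continuous with respect to 𝒜 if and only if f is conversely Cantor-continuous with respect to 𝒜. (Equivalently: on a finite state space, the sets of Cantor-continuous and of conversely Cantor-continuous bijections coincide.) -/
/-!
For a bijection `e`, `e '' B ⊆ A ↔ B ⊆ e⁻¹ '' A`, so `e` is Cantor-continuous exactly when `e⁻¹`
is conversely Cantor-continuous, and vice versa. Both notions are stable under composition, hence
under iteration, and on a finite type `e` is an iterate of `e⁻¹`.
-/

section

variable {Y : Type*} {𝒜 : Set (Set Y)}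

theorem cantorCont_id : CantorCont 𝒜 id :=
  fun A hA hAne ↦ ⟨A, hA, hAne, by rw [Set.image_id]⟩

theorem convCantorCont_id : ConvCantorCont 𝒜 id :=
  fun A hA hAne ↦ ⟨A, hA, hAne, by rw [Set.image_id]⟩

theorem CantorCont.comp {f g : Y → Y} (hf : CantorCont 𝒜 f) (hg : CantorCont 𝒜 g) :
    CantorCont 𝒜 (f ∘ g) := by
  intro A hA hAne
  obtain ⟨B, hB, hBne, hfB⟩ := hf A hA hAne
  obtain ⟨C, hC, hCne, hgC⟩ := hg B hB hBne
  refine ⟨C, hC, hCne, ?_⟩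
  rw [Set.image_comp]
  exact (Set.image_mono hgC).trans hfB

theorem ConvCantorCont.comp {f g : Y → Y} (hf : ConvCantorCont 𝒜 f) (hg : ConvCantorCont 𝒜 g) :
    ConvCantorCont 𝒜 (f ∘ g) := by
  intro A hA hAne
  obtain ⟨B, hB, hBne, hBg⟩ := hg A hA hAne
  obtain ⟨C, hC, hCne, hCf⟩ := hf B hB hBne
  refine ⟨C, hC, hCne, ?_⟩
  rw [Set.image_comp]
  exact hCf.trans (Set.image_mono hBg)

theorem CantorCont.iterate {f : Y → Y} (hf : CantorCont 𝒜 f) (n : ℕ) : CantorCont 𝒜 f^[n] := by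
  induction n with
  | zero => exact cantorCont_id
  | succ n ih => rw [Function.iterate_succ]; exact ih.comp hf

theorem ConvCantorCont.iterate {f : Y → Y} (hf : ConvCantorCont 𝒜 f) (n : ℕ) :
    ConvCantorCont 𝒜 f^[n] := by
  induction n with
  | zero => exact convCantorCont_id
  | succ n ih => rw [Function.iterate_succ]; exact ih.comp hf

theorem cantorCont_iff_convCantorCont_symm (e : Y ≃ Y) :
    CantorCont 𝒜 e ↔ ConvCantorCont 𝒜 e.symm := by
  simp only [CantorCont, ConvCantorCont, Equiv.subset_symm_image]

theorem Equiv.Perm.exists_coe_eq_iterate_inv {e : Equiv.Perm Y} (he : IsOfFinOrder e) :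
    ∃ n, ⇑e = (⇑e⁻¹)^[n] := by
  obtain ⟨n, hn⟩ := he.inv.mem_powers_iff_mem_zpowers.2 (inv_mem (Subgroup.mem_zpowers e⁻¹))
  refine ⟨n, ?_⟩
  rw [← Equiv.Perm.coe_pow, show e⁻¹ ^ n = e from hn.trans (inv_inv e)]

theorem cantorCont_iff_convCantorCont_of_isOfFinOrder {e : Equiv.Perm Y} (he : IsOfFinOrder e) :
    CantorCont 𝒜 e ↔ ConvCantorCont 𝒜 e := by
  obtain ⟨n, hn⟩ := Equiv.Perm.exists_coe_eq_iterate_inv he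
  constructor
  · intro h
    rw [hn]
    exact ((cantorCont_iff_convCantorCont_symm e).1 h).iterate n
  · intro h
    have hinv : CantorCont 𝒜 e.symm := by
      rwa [cantorCont_iff_convCantorCont_symm, Equiv.symm_symm]
    rw [hn]
    exact hinv.iterate n

end

/-- Bemerkung 3.10 (C₊-C₋-Koinzidenz im endlichen Zustandsraum): on a finite
type, a bijection is Cantor-continuous iff it is conversely Cantor-continuous. -/
theorem cantorCont_iff_convCantorCont_of_finite {Y : Type*} [Finite Y]
    (𝒜 : Set (Set Y)) (f : Y → Y) (hf : Function.Bijective f) :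
    CantorCont 𝒜 f ↔ ConvCantorCont 𝒜 f :=
  cantorCont_iff_convCantorCont_of_isOfFinOrder (isOfFinOrder_of_finite (Equiv.ofBijective f hf))
end
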